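/- arXiv:2001.05907 — 2 statements merged into one kernel-verified Lean document; each statement's English description precedes it below -/
import Mathlib

section
/- For every t ≥ 1 and n = 2^t, the minimum squared distances of the Barnes–Wall lattices satisfy d(BW_{2n}) = 2·d(BW_n) and d(RBW_n) = 2·d(BW_n); consequently d(BW_{2^t}) = 2^{t−1} for all t ≥ 1, i.e., d(BW_n) = n/2. -/
open Matrix

noncomputable section

/-- `Rmat n` is the `n × n` matrix `I_{n/2} ⊗ R(2)`, block diagonal with
`2 × 2` blocks `[[1, 1], [1, -1]]`, acting on row vectors on the right. -/
def Rmat (n : ℕ) : Matrix (Fin n) (Fin n) ℝ :=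
  Matrix.of fun i j =>
    if (i : ℕ) / 2 = (j : ℕ) / 2 then
      if (i : ℕ) % 2 = 1 ∧ (j : ℕ) % 2 = 1 then -1 else 1
    else 0

/-- Concatenation `(u, v)` of two `2^t`-dimensional vectors into a
`2^(t+1)`-dimensional vector. -/
def concat {t : ℕ} (u v : Fin (2 ^ t) → ℝ) : Fin (2 ^ (t + 1)) → ℝ := fun i =>
  if h : (i : ℕ) < 2 ^ t then u ⟨i, h⟩
  else v ⟨(i : ℕ) - 2 ^ t, by
    have hi := i.isLt
    have h2 : 2 ^ (t + 1) = 2 ^ t + 2 ^ t := by rw [pow_succ]; ring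
    omega⟩

/-- The Barnes–Wall lattices `BW_{2^t} ⊆ ℝ^{2^t}`, defined recursively by
`BW_2 = ℤ²` and `BW_{2n} = {(u, u + v) : u ∈ BW_n, v ∈ BW_n · R(n)}`. -/
def BW : ∀ t : ℕ, Set (Fin (2 ^ t) → ℝ)
  | 0 => {x | ∀ i, ∃ z : ℤ, x i = (z : ℝ)}
  | (t + 1) =>
    {x | ∃ u v : Fin (2 ^ t) → ℝ, u ∈ BW t ∧
      (∃ w ∈ BW t, v = Matrix.vecMul w (Rmat (2 ^ t))) ∧ x = concat u (u + v)}

/-- `RBW_n = {x · R(n) : x ∈ BW_n}`. -/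
def RBW (t : ℕ) : Set (Fin (2 ^ t) → ℝ) :=
  (fun x => Matrix.vecMul x (Rmat (2 ^ t))) '' BW t

/-- Squared Euclidean norm. -/
def sqnorm {m : ℕ} (x : Fin m → ℝ) : ℝ := ∑ i, x i ^ 2

/-- `minDist Λ` is the minimum of `‖x‖²` over nonzero `x ∈ Λ`. -/
def minDist {m : ℕ} (Λ : Set (Fin m → ℝ)) : ℝ :=
  sInf (sqnorm '' {x ∈ Λ | x ≠ 0})

/-!
`R(n)` is `I_{n/2} ⊗ R(2)` and `R(2)` is `√2` times an orthogonal matrix, so `x ↦ x·R(n)` scales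
squared norms by `2` and `d(RBW_n) = 2 d(BW_n)`. `BW_{2n}` is the Plotkin sum `(u | u + v)` of
`BW_n` and `RBW_n`, and `RBW_n ⊆ BW_n` by induction, since `R(2n)` acts on each half as `R(n)`.
A nonzero `(u, u + v)` has squared norm `‖u‖² + ‖u + v‖²`: if `u` and `u + v` are both nonzero
they lie in `BW_n` and each contributes at least `d(BW_n)`; otherwise the norm is
`‖v‖² ≥ d(RBW_n) = 2 d(BW_n)`. The bound is attained by `(u, u)` for `u` minimal in `BW_n`, so
`d(BW_{2n}) = 2 d(BW_n)`, and `d(BW_2) = d(ℤ²) = 1` starts the induction.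
-/

lemma sqnorm_nonneg {m : ℕ} (x : Fin m → ℝ) : 0 ≤ sqnorm x :=
  Finset.sum_nonneg fun i _ => sq_nonneg (x i)

lemma sqnorm_eq_zero_iff {m : ℕ} {x : Fin m → ℝ} : sqnorm x = 0 ↔ x = 0 := by
  simp [sqnorm, Finset.sum_eq_zero_iff_of_nonneg fun i _ => sq_nonneg (x i), funext_iff]

lemma sqnorm_neg {m : ℕ} (x : Fin m → ℝ) : sqnorm (-x) = sqnorm x := by
  simp [sqnorm]

lemma sq_le_sqnorm {m : ℕ} (x : Fin m → ℝ) (i : Fin m) : x i ^ 2 ≤ sqnorm x :=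
  Finset.single_le_sum (f := fun j => x j ^ 2) (fun j _ => sq_nonneg (x j)) (Finset.mem_univ i)

def halves (t : ℕ) : Fin (2 ^ t) ⊕ Fin (2 ^ t) ≃ Fin (2 ^ (t + 1)) :=
  finSumFinEquiv.trans (finCongr (by rw [pow_succ, mul_two]))

section Concat

variable {t : ℕ}

lemma concat_comp_halves (u v : Fin (2 ^ t) → ℝ) : concat u v ∘ halves t = Sum.elim u v := by
  ext (i | i) <;> simp [concat, halves]

lemma concat_eq_sumElim_comp (u v : Fin (2 ^ t) → ℝ) :
    concat u v = Sum.elim u v ∘ (halves t).symm := by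
  rw [← concat_comp_halves, Function.comp_assoc, Equiv.self_comp_symm, Function.comp_id]

lemma concat_halves (w : Fin (2 ^ (t + 1)) → ℝ) :
    concat (w ∘ halves t ∘ .inl) (w ∘ halves t ∘ .inr) = w := by
  ext i
  obtain ⟨i | i, rfl⟩ := (halves t).surjective i <;> simp [concat_eq_sumElim_comp]

lemma concat_add (u v u' v' : Fin (2 ^ t) → ℝ) :
    concat u v + concat u' v' = concat (u + u') (v + v') := by
  ext i
  obtain ⟨i | i, rfl⟩ := (halves t).surjective i <;> simp [concat_eq_sumElim_comp]

lemma sqnorm_concat (u v : Fin (2 ^ t) → ℝ) : sqnorm (concat u v) = sqnorm u + sqnorm v := by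
  simp only [sqnorm, ← (halves t).sum_comp, Fintype.sum_sum_type]
  simp [concat_eq_sumElim_comp]

lemma concat_eq_zero_iff {u v : Fin (2 ^ t) → ℝ} : concat u v = 0 ↔ u = 0 ∧ v = 0 := by
  rw [← sqnorm_eq_zero_iff, sqnorm_concat, add_eq_zero_iff_of_nonneg (sqnorm_nonneg u)
    (sqnorm_nonneg v), sqnorm_eq_zero_iff, sqnorm_eq_zero_iff]

end Concat

lemma Rmat_two_pow_zero : Rmat (2 ^ 0) = 1 := by
  ext i j
  fin_cases i; fin_cases j
  simp [Rmat]

lemma vecMul_Rmat_two (w : Fin 2 → ℝ) : w ᵥ* Rmat 2 = ![w 0 + w 1, w 0 - w 1] := by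
  ext j
  fin_cases j <;> simp [vecMul, dotProduct, Fin.sum_univ_two, Rmat, sub_eq_add_neg]

lemma sqnorm_vecMul_Rmat_two (w : Fin 2 → ℝ) : sqnorm (w ᵥ* Rmat 2) = 2 * sqnorm w := by
  simp only [vecMul_Rmat_two, sqnorm, Fin.sum_univ_two, cons_val_zero, cons_val_one,
    cons_val_fin_one]
  ring

lemma Rmat_submatrix_halves {t : ℕ} (ht : 1 ≤ t) :
    (Rmat (2 ^ (t + 1))).submatrix (halves t) (halves t) =
      fromBlocks (Rmat (2 ^ t)) 0 0 (Rmat (2 ^ t)) := by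
  obtain ⟨m, hm⟩ : ∃ m, 2 ^ t = 2 * m := ⟨2 ^ (t - 1), by rw [← pow_succ']; congr 1; omega⟩
  ext (i | i) (j | j) <;>
    simp only [halves, Rmat, Equiv.coe_trans, submatrix_apply, Function.comp_apply, finCongr_apply,
      finSumFinEquiv_apply_left, finSumFinEquiv_apply_right, Fin.natAdd_eq_addNat, of_apply,
      Fin.val_cast, Fin.val_castAdd, Fin.val_addNat, fromBlocks_apply₁₁, fromBlocks_apply₁₂,
      fromBlocks_apply₂₁, fromBlocks_apply₂₂, Matrix.zero_apply] <;>
    have := i.isLt <;> have := j.isLt <;> split_ifs <;> first | rfl | omega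

lemma concat_vecMul_Rmat {t : ℕ} (ht : 1 ≤ t) (u v : Fin (2 ^ t) → ℝ) :
    concat u v ᵥ* Rmat (2 ^ (t + 1)) = concat (u ᵥ* Rmat (2 ^ t)) (v ᵥ* Rmat (2 ^ t)) := by
  have hR : Rmat (2 ^ (t + 1)) =
      (fromBlocks (Rmat (2 ^ t)) 0 0 (Rmat (2 ^ t))).submatrix (halves t).symm (halves t).symm := by
    rw [← Rmat_submatrix_halves ht, submatrix_submatrix, Equiv.self_comp_symm, submatrix_id_id]
  rw [hR, submatrix_vecMul_equiv, Equiv.symm_symm, concat_comp_halves, vecMul_fromBlocks,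
    concat_eq_sumElim_comp]
  simp

lemma sqnorm_vecMul_Rmat {t : ℕ} (ht : 1 ≤ t) (w : Fin (2 ^ t) → ℝ) :
    sqnorm (w ᵥ* Rmat (2 ^ t)) = 2 * sqnorm w := by
  induction t, ht using Nat.le_induction with
  | base =>
    exact sqnorm_vecMul_Rmat_two w
  | succ t ht ih =>
    rw [← concat_halves w, concat_vecMul_Rmat ht, sqnorm_concat, sqnorm_concat, ih, ih, mul_add]

def plotkinSum {t : ℕ} (Λ M : Set (Fin (2 ^ t) → ℝ)) : Set (Fin (2 ^ (t + 1)) → ℝ) :=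
  {x | ∃ u ∈ Λ, ∃ v ∈ M, x = concat u (u + v)}

-- Unlike `minDist Λ = c`, this says the minimum is attained: `sInf ∅ = 0` in `ℝ`.
def IsMinDist {m : ℕ} (Λ : Set (Fin m → ℝ)) (c : ℝ) : Prop :=
  IsLeast (sqnorm '' {x ∈ Λ | x ≠ 0}) c

namespace IsMinDist

variable {m : ℕ} {Λ : Set (Fin m → ℝ)} {c : ℝ}

lemma minDist_eq (h : IsMinDist Λ c) : minDist Λ = c := IsLeast.csInf_eq h

lemma le_sqnorm (h : IsMinDist Λ c) {x : Fin m → ℝ} (hx : x ∈ Λ) (hx0 : x ≠ 0) : c ≤ sqnorm x :=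
  h.2 ⟨x, ⟨hx, hx0⟩, rfl⟩

lemma image {n : ℕ} {f : (Fin m → ℝ) → Fin n → ℝ} {a : ℝ} (ha : 0 < a)
    (hf : ∀ x, sqnorm (f x) = a * sqnorm x) (h : IsMinDist Λ c) : IsMinDist (f '' Λ) (a * c) := by
  have hf0 : ∀ x, f x = 0 ↔ x = 0 := fun x => by
    rw [← sqnorm_eq_zero_iff, hf, mul_eq_zero, sqnorm_eq_zero_iff, or_iff_right ha.ne']
  obtain ⟨x, ⟨hx, hx0⟩, hxc⟩ := h.1
  refine ⟨⟨f x, ⟨⟨x, hx, rfl⟩, (hf0 x).not.2 hx0⟩, by rw [hf, hxc]⟩, ?_⟩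
  rintro _ ⟨_, ⟨⟨y, hy, rfl⟩, hy0⟩, rfl⟩
  rw [hf]
  exact mul_le_mul_of_nonneg_left (h.le_sqnorm hy ((hf0 y).not.1 hy0)) ha.le

end IsMinDist

lemma isMinDist_intVecs (m : ℕ) [NeZero m] :
    IsMinDist {x : Fin m → ℝ | ∀ i, ∃ z : ℤ, x i = z} 1 := by
  refine ⟨⟨Pi.single 0 1, ⟨fun i => ⟨if i = 0 then 1 else 0, ?_⟩, by simp⟩, ?_⟩, ?_⟩
  · simp [Pi.single_apply, apply_ite (Int.cast : ℤ → ℝ)]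
  · simp [sqnorm, Pi.single_apply, apply_ite (· ^ 2)]
  rintro _ ⟨x, ⟨hx, hx0⟩, rfl⟩
  obtain ⟨i, hi⟩ := Function.ne_iff.1 hx0
  obtain ⟨z, hz⟩ := hx i
  have hz0 : z ≠ 0 := by rintro rfl; simp_all
  calc (1 : ℝ) ≤ (z : ℝ) ^ 2 := mod_cast (one_le_sq_iff_one_le_abs z).2 (Int.one_le_abs hz0)
    _ = x i ^ 2 := by rw [hz]
    _ ≤ sqnorm x := sq_le_sqnorm x i

lemma IsMinDist.plotkinSum {t : ℕ} {Λ M : Set (Fin (2 ^ t) → ℝ)} {c : ℝ} (hΛ : IsMinDist Λ c)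
    (hadd : ∀ x ∈ Λ, ∀ y ∈ Λ, x + y ∈ Λ) (hMΛ : M ⊆ Λ) (h0 : 0 ∈ M)
    (hM : 2 * c ∈ lowerBounds (sqnorm '' {v ∈ M | v ≠ 0})) :
    IsMinDist (plotkinSum Λ M) (2 * c) := by
  obtain ⟨u, ⟨hu, hu0⟩, huc⟩ := hΛ.1
  refine ⟨⟨concat u (u + 0), ⟨⟨u, hu, 0, h0, rfl⟩, by simp [concat_eq_zero_iff, hu0]⟩, by
    rw [add_zero, sqnorm_concat, huc, two_mul]⟩, ?_⟩
  rintro _ ⟨_, ⟨⟨u, hu, v, hv, rfl⟩, hne⟩, rfl⟩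
  have hMv : v ≠ 0 → 2 * c ≤ sqnorm v := fun hv0 => hM ⟨v, ⟨hv, hv0⟩, rfl⟩
  rw [sqnorm_concat]
  by_cases hu0 : u = 0
  · subst hu0
    rw [ne_eq, concat_eq_zero_iff, zero_add] at hne
    simpa [sqnorm] using hMv (by tauto)
  by_cases huv : u + v = 0
  · have hvu : v = -u := eq_neg_of_add_eq_zero_right huv
    rw [huv, sqnorm_eq_zero_iff.2 rfl, add_zero, ← sqnorm_neg, ← hvu]
    exact hMv (by simpa [hvu] using hu0)
  · linarith [hΛ.le_sqnorm hu hu0, hΛ.le_sqnorm (hadd u hu v (hMΛ hv)) huv]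

lemma BW_succ (t : ℕ) : BW (t + 1) = plotkinSum (BW t) (RBW t) := by
  ext x
  constructor
  · rintro ⟨u, _, hu, ⟨w, hw, rfl⟩, rfl⟩
    exact ⟨u, hu, _, ⟨w, hw, rfl⟩, rfl⟩
  · rintro ⟨u, hu, _, ⟨w, hw, rfl⟩, rfl⟩
    exact ⟨u, _, hu, ⟨w, hw, rfl⟩, rfl⟩

lemma zero_mem_BW : ∀ t, (0 : Fin (2 ^ t) → ℝ) ∈ BW t
  | 0 => fun _ => ⟨0, by simp⟩
  | t + 1 => ⟨0, 0, zero_mem_BW t, ⟨0, zero_mem_BW t, (zero_vecMul _).symm⟩,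
      by rw [add_zero, eq_comm, concat_eq_zero_iff]; simp⟩

lemma add_mem_BW : ∀ {t} {x y : Fin (2 ^ t) → ℝ}, x ∈ BW t → y ∈ BW t → x + y ∈ BW t
  | 0, _, _, hx, hy => fun i => by
    obtain ⟨a, ha⟩ := hx i
    obtain ⟨b, hb⟩ := hy i
    exact ⟨a + b, by simp [ha, hb]⟩
  | t + 1, _, _, ⟨u, _, hu, ⟨w, hw, rfl⟩, rfl⟩, ⟨u', _, hu', ⟨w', hw', rfl⟩, rfl⟩ =>
    ⟨u + u', _, add_mem_BW hu hu', ⟨w + w', add_mem_BW hw hw', (add_vecMul _ _ _).symm⟩, by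
      rw [concat_add, add_add_add_comm]⟩

lemma BW_one : BW 1 = {x | ∀ i, ∃ z : ℤ, x i = (z : ℝ)} := by
  ext x
  constructor
  · rintro ⟨u, _, hu, ⟨w, hw, rfl⟩, rfl⟩ i
    rw [Rmat_two_pow_zero, vecMul_one]
    obtain ⟨i | i, rfl⟩ := (halves 0).surjective i
    · simpa [concat_eq_sumElim_comp] using hu i
    · obtain ⟨a, ha⟩ := hu i
      obtain ⟨b, hb⟩ := hw i
      exact ⟨a + b, by simp [concat_eq_sumElim_comp, ha, hb]⟩
  · intro hx
    rw [← concat_halves x]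
    set a := x ∘ halves 0 ∘ .inl
    set b := x ∘ halves 0 ∘ .inr
    refine ⟨a, b - a, fun i => hx _, ⟨b - a, fun i => ?_, by rw [Rmat_two_pow_zero, vecMul_one]⟩,
      by rw [add_sub_cancel]⟩
    obtain ⟨k, hk⟩ := hx (halves 0 (.inr i))
    obtain ⟨l, hl⟩ := hx (halves 0 (.inl i))
    exact ⟨k - l, by simp [a, b, hk, hl]⟩

lemma RBW_subset_BW {t : ℕ} (ht : 1 ≤ t) : RBW t ⊆ BW t := by
  induction t, ht using Nat.le_induction with
  | base =>
    rintro _ ⟨w, hw, rfl⟩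
    rw [BW_one] at hw ⊢
    intro i
    obtain ⟨a, ha⟩ := hw 0
    obtain ⟨b, hb⟩ := hw 1
    change ∃ z : ℤ, (w ᵥ* Rmat 2) i = z
    rw [vecMul_Rmat_two]
    fin_cases i
    · exact ⟨a + b, by simp [ha, hb]⟩
    · exact ⟨a - b, by simp [ha, hb]⟩
  | succ t ht ih =>
    rintro _ ⟨_, ⟨u, _, hu, ⟨w, hw, rfl⟩, rfl⟩, rfl⟩
    dsimp only
    rw [concat_vecMul_Rmat ht, add_vecMul]
    exact ⟨_, _, ih ⟨u, hu, rfl⟩, ⟨w ᵥ* Rmat (2 ^ t), ih ⟨w, hw, rfl⟩, rfl⟩, rfl⟩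

lemma IsMinDist.RBW {t : ℕ} {c : ℝ} (ht : 1 ≤ t) (h : IsMinDist (BW t) c) :
    IsMinDist (RBW t) (2 * c) :=
  h.image two_pos (sqnorm_vecMul_Rmat ht)

lemma IsMinDist.BW_succ {t : ℕ} {c : ℝ} (ht : 1 ≤ t) (h : IsMinDist (BW t) c) :
    IsMinDist (BW (t + 1)) (2 * c) := by
  rw [_root_.BW_succ]
  exact h.plotkinSum (fun x hx y hy => add_mem_BW hx hy) (RBW_subset_BW ht)
    ⟨0, zero_mem_BW t, zero_vecMul _⟩ (h.RBW ht).2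

lemma isMinDist_BW {t : ℕ} (ht : 1 ≤ t) : IsMinDist (BW t) (2 ^ (t - 1)) := by
  induction t, ht using Nat.le_induction with
  | base =>
    rw [BW_one, Nat.sub_self, pow_zero]
    exact isMinDist_intVecs (2 ^ 1)
  | succ t ht ih =>
    rw [show (2 : ℝ) ^ (t + 1 - 1) = 2 * 2 ^ (t - 1) by
      rw [← pow_succ', Nat.sub_add_cancel ht, Nat.add_sub_cancel]]
    exact ih.BW_succ ht

/-- `d(BW_{2n}) = 2·d(BW_n)`, `d(RBW_n) = 2·d(BW_n)`, and
consequently `d(BW_{2^t}) = 2^{t−1}`, i.e. `d(BW_n) = n/2`. -/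
theorem bw_min_dist :
    ∀ t : ℕ, 1 ≤ t →
      minDist (BW (t + 1)) = 2 * minDist (BW t) ∧
      minDist (RBW t) = 2 * minDist (BW t) ∧
      minDist (BW t) = (2 : ℝ) ^ (t - 1) := by
  intro t ht
  have hBW := isMinDist_BW ht
  rw [(hBW.BW_succ ht).minDist_eq, (hBW.RBW ht).minDist_eq, hBW.minDist_eq]
  exact ⟨rfl, rfl, rfl⟩
end
end

section
/- (Johnson-type bound, small radius.) Let t ≥ 1, n = 2^t, and 0 < ε ≤ 1/4. For every y ∈ ℝⁿ and every r² ≤ d(BW_n)·(1/2 − ε), the number of points x ∈ BW_n with ‖y − x‖² ≤ r² is at most 1/(2ε); i.e., L(n, r²) ≤ 1/(2ε). -/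
open Matrix

noncomputable section

/-- inner product -/
def inner' {m : ℕ} (a b : Fin m → ℝ) : ℝ := ∑ i, a i * b i

lemma inner'_self {m : ℕ} (a : Fin m → ℝ) : inner' a a = sqnorm a := by
  simp [inner', sqnorm, sq]

lemma sqnorm_sub {m : ℕ} (a b : Fin m → ℝ) :
    sqnorm (a - b) = sqnorm a + sqnorm b - 2 * inner' a b := by
  simp only [sqnorm, inner', Pi.sub_apply, Finset.mul_sum,
    ← Finset.sum_add_distrib, ← Finset.sum_sub_distrib]
  exact Finset.sum_congr rfl fun i _ => by ring

lemma sqnorm_sum {m : ℕ} {α : Type*} (S : Finset α) (f : α → Fin m → ℝ) :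
    sqnorm (∑ x ∈ S, f x) = ∑ x ∈ S, ∑ x' ∈ S, inner' (f x) (f x') := by
  simp only [sqnorm, inner', Finset.sum_apply, sq, Finset.sum_mul_sum]
  rw [Finset.sum_comm]
  exact Finset.sum_congr rfl fun x _ => Finset.sum_comm

lemma sqnorm_sub_le {m : ℕ} (a b : Fin m → ℝ) :
    sqnorm (a - b) ≤ 2 * sqnorm a + 2 * sqnorm b := by
  simp only [sqnorm, Pi.sub_apply, Finset.mul_sum, ← Finset.sum_add_distrib]
  exact Finset.sum_le_sum fun i _ => by nlinarith [sq_nonneg (a i + b i)]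

lemma sqnorm_pos {m : ℕ} {z : Fin m → ℝ} (hz : z ≠ 0) : 0 < sqnorm z := by
  rcases Function.ne_iff.mp hz with ⟨i, hi⟩
  have : (0:ℝ) < z i ^ 2 := (sq_nonneg _).lt_of_ne (Ne.symm (pow_ne_zero 2 hi))
  calc (0:ℝ) < z i ^ 2 := this
    _ ≤ sqnorm z := Finset.single_le_sum (fun j _ => sq_nonneg (z j)) (Finset.mem_univ i)

lemma minDist_le {m : ℕ} (Λ : Set (Fin m → ℝ)) {z : Fin m → ℝ}
    (hz : z ∈ Λ) (h0 : z ≠ 0) : minDist Λ ≤ sqnorm z := by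
  apply csInf_le
  · exact ⟨0, fun a ⟨x, _, hx⟩ => hx ▸ sqnorm_nonneg x⟩
  · exact ⟨z, ⟨hz, h0⟩, rfl⟩

lemma concat_sub {t : ℕ} (a b a' b' : Fin (2 ^ t) → ℝ) :
    concat a b - concat a' b' = concat (a - a') (b - b') := by
  funext i
  simp only [Pi.sub_apply, concat]
  split <;> simp

lemma BW_sub : ∀ t : ℕ, ∀ x ∈ BW t, ∀ x' ∈ BW t, x - x' ∈ BW t := by
  intro t
  induction t with
  | zero =>
    intro x hx x' hx' i
    obtain ⟨z, hz⟩ := hx i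
    obtain ⟨z', hz'⟩ := hx' i
    exact ⟨z - z', by simp [hz, hz']⟩
  | succ t ih =>
    rintro x ⟨u, v, hu, ⟨w, hw, rfl⟩, rfl⟩ x' ⟨u', v', hu', ⟨w', hw', rfl⟩, rfl⟩
    refine ⟨u - u', Matrix.vecMul (w - w') (Rmat (2 ^ t)), ih u hu u' hu',
      ⟨w - w', ih w hw w' hw', rfl⟩, ?_⟩
    rw [concat_sub, Matrix.sub_vecMul]
    congr 1
    abel

lemma key_count {m : ℕ} (S : Finset (Fin m → ℝ)) (y : Fin m → ℝ) (d r2 ε : ℝ)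
    (hd : 0 < d) (hε : 0 < ε) (hr : r2 ≤ d * (1 / 2 - ε))
    (hball : ∀ x ∈ S, sqnorm (y - x) ≤ r2)
    (hpair : ∀ x ∈ S, ∀ x' ∈ S, x ≠ x' → d ≤ sqnorm (x - x')) :
    (S.card : ℝ) ≤ 1 / (2 * ε) := by
  rcases S.eq_empty_or_nonempty with rfl | hne
  · simp; positivity
  have hN1 : 1 ≤ S.card := Finset.card_pos.mpr hne
  set N : ℝ := (S.card : ℝ) with hNdef
  have hNpos : (0:ℝ) < N := by rw [hNdef]; exact_mod_cast hN1
  -- key inequality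
  have h0 : (0:ℝ) ≤ ∑ x ∈ S, ∑ x' ∈ S, inner' (y - x) (y - x') := by
    rw [← sqnorm_sum]; exact sqnorm_nonneg _
  have hbound : ∑ x ∈ S, ∑ x' ∈ S, inner' (y - x) (y - x')
      ≤ N * (r2 + (N - 1) * (-(ε * d))) := by
    rw [show N * (r2 + (N - 1) * (-(ε * d))) = ∑ _x ∈ S, (r2 + (N - 1) * (-(ε * d))) by
      rw [Finset.sum_const, nsmul_eq_mul]]
    refine Finset.sum_le_sum fun x hx => ?_
    rw [← Finset.add_sum_erase _ _ hx]
    have h1 : inner' (y - x) (y - x) ≤ r2 := by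
      rw [inner'_self]; exact hball x hx
    have h2 : ∑ x' ∈ S.erase x, inner' (y - x) (y - x') ≤ (N - 1) * (-(ε * d)) := by
      have hcard : ((S.erase x).card : ℝ) = N - 1 := by
        rw [Finset.card_erase_of_mem hx, Nat.cast_sub hN1, Nat.cast_one]
      calc ∑ x' ∈ S.erase x, inner' (y - x) (y - x')
          ≤ (S.erase x).card • (-(ε * d)) := by
            refine Finset.sum_le_card_nsmul _ _ _ fun x' hx' => ?_
            have hx'S : x' ∈ S := Finset.mem_of_mem_erase hx'
            have hne' : x' ≠ x := Finset.ne_of_mem_erase hx'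
            have hdd : d ≤ sqnorm (x' - x) := hpair x' hx'S x hx hne'
            have heq : (y - x) - (y - x') = x' - x := by abel
            have := sqnorm_sub (y - x) (y - x')
            rw [heq] at this
            have hb1 := hball x hx
            have hb2 := hball x' hx'S
            nlinarith
        _ = (N - 1) * (-(ε * d)) := by rw [nsmul_eq_mul, hcard]
    linarith
  have hmain : 0 ≤ r2 + (N - 1) * (-(ε * d)) := by
    nlinarith
  have : (N - 1) * (ε * d) ≤ d * (1 / 2 - ε) := by linarith
  have hNε : N * ε ≤ 1 / 2 := by nlinarith
  rw [le_div_iff₀ (by positivity)]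
  nlinarith

/-- Johnson-type bound, small radius: for `0 < ε ≤ 1/4`, every
`y ∈ ℝⁿ`, and every `r² ≤ d(BW_n)·(1/2 − ε)`, the number of `x ∈ BW_n` with
`‖y − x‖² ≤ r²` is at most `1/(2ε)`. -/
theorem bw_list_size_small_radius :
    ∀ t : ℕ, 1 ≤ t → ∀ ε : ℝ, 0 < ε → ε ≤ 1 / 4 →
      ∀ y : Fin (2 ^ t) → ℝ, ∀ r2 : ℝ,
        r2 ≤ minDist (BW t) * (1 / 2 - ε) →
        {x ∈ BW t | sqnorm (y - x) ≤ r2}.Finite ∧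
        ({x ∈ BW t | sqnorm (y - x) ≤ r2}.ncard : ℝ) ≤ 1 / (2 * ε) := by
  intro t ht ε hε hε4 y r2 hr
  set T : Set (Fin (2 ^ t) → ℝ) := {x ∈ BW t | sqnorm (y - x) ≤ r2} with hT
  have hεd2 : (2:ℝ) ≤ 1 / (2 * ε) := by
    rw [le_div_iff₀ (by positivity)]; linarith
  by_cases hsub : T.Subsingleton
  · refine ⟨hsub.finite, ?_⟩
    rcases hsub.eq_empty_or_singleton with he | ⟨a, he⟩
    · rw [he, Set.ncard_empty]; norm_num; positivity
    · rw [he, Set.ncard_singleton]; exact le_trans (by norm_num) hεd2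
  · -- there are two distinct points, so minDist > 0
    rw [Set.not_subsingleton_iff] at hsub
    obtain ⟨x₁, hx₁, x₂, hx₂, hne⟩ := hsub
    set d : ℝ := minDist (BW t) with hd
    have hz : x₁ - x₂ ∈ BW t := BW_sub t x₁ hx₁.1 x₂ hx₂.1
    have hz0 : x₁ - x₂ ≠ 0 := sub_ne_zero_of_ne hne
    have hdle : d ≤ sqnorm (x₁ - x₂) := minDist_le _ hz hz0
    have hzpos : 0 < sqnorm (x₁ - x₂) := sqnorm_pos hz0
    have hle4 : sqnorm (x₁ - x₂) ≤ 4 * r2 := by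
      have heq : x₁ - x₂ = (y - x₂) - (y - x₁) := by abel
      have := sqnorm_sub_le (y - x₂) (y - x₁)
      rw [← heq] at this
      have h1 := hx₁.2
      have h2 := hx₂.2
      linarith
    have hr2pos : 0 < r2 := by linarith
    have hdpos : 0 < d := by nlinarith
    have hcount : ∀ S : Finset (Fin (2 ^ t) → ℝ), ↑S ⊆ T → (S.card : ℝ) ≤ 1 / (2 * ε) := by
      intro S hS
      refine key_count S y d r2 ε hdpos hε hr (fun x hx => (hS hx).2) ?_
      intro a ha b hb hab
      exact minDist_le _ (BW_sub t a (hS ha).1 b (hS hb).1) (sub_ne_zero_of_ne hab)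
    have hfin : T.Finite := by
      by_contra hinf
      have hinf' : T.Infinite := hinf
      obtain ⟨S, hS, hScard⟩ := hinf'.exists_subset_card_eq (⌊1 / (2 * ε)⌋₊ + 1)
      have := hcount S hS
      rw [hScard] at this
      have h2 : (1:ℝ) / (2 * ε) < ⌊1 / (2 * ε)⌋₊ + 1 := Nat.lt_floor_add_one _
      push_cast at this
      linarith
    refine ⟨hfin, ?_⟩
    have := hcount hfin.toFinset (by simp)
    rwa [← Set.ncard_eq_toFinset_card T hfin] at this
end
end
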